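/- arXiv:2504.03969 — 5 statements merged into one kernel-verified Lean document; each statement's English description precedes it below -/
import Mathlib

section
/- For all natural numbers k and l, S(k,l) = S(l,k). -/
open Finset

/-- `Young k l` is the set of Young diagrams of height at most `k` and width at most `l`:
integer sequences `l ≥ λ_1 ≥ … ≥ λ_k ≥ 0`, encoded as antitone functions `Fin k → ℕ`
bounded by `l`. -/
def Young (k l : ℕ) : Finset (Fin k → ℕ) :=
  (Fintype.piFinset fun _ => Finset.range (l + 1)).filter
    fun lam => ∀ i j : Fin k, i ≤ j → lam j ≤ lam i

/-- `R k l` is the number of Young diagrams of height at most `k` and width at most `l`. -/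
def R (k l : ℕ) : ℕ := (Young k l).card

/-- The complement of a Young diagram inside the `k × l` rectangle:
`(λ^c)_i = l - λ_{k+1-i}`. -/
def Ycomp (l : ℕ) {k : ℕ} (lam : Fin k → ℕ) : Fin k → ℕ :=
  fun i => l - lam i.rev

/-- `S k l` is the number of symmetric partitions (`λ = λ^c`) in `Young k l`. -/
def S (k l : ℕ) : ℕ := ((Young k l).filter fun lam => Ycomp l lam = lam).card

/-- `A k l` is the number of asymmetric partitions (`λ ≠ λ^c`) in `Young k l`. -/
def A (k l : ℕ) : ℕ := ((Young k l).filter fun lam => Ycomp l lam ≠ lam).card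

/-- The transpose of a Young diagram: `(λ^t)_j = #{ i | λ_i ≥ j }` (here `j : Fin l` is
the 0-indexed version of the 1-indexed column index `j+1`). -/
def Ytr {k : ℕ} (l : ℕ) (lam : Fin k → ℕ) : Fin l → ℕ :=
  fun j => (Finset.univ.filter fun i : Fin k => (j : ℕ) + 1 ≤ lam i).card


lemma card_fin_lt {l m : ℕ} (h : m ≤ l) :
    (Finset.univ.filter fun j : Fin l => (j : ℕ) < m).card = m := by
  have he : (Finset.univ.filter fun j : Fin l => (j : ℕ) < m) =
      (Finset.range m).attachFin (fun x hx => lt_of_lt_of_le (Finset.mem_range.1 hx) h) := by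
    ext j; simp [Finset.mem_attachFin]
  rw [he, Finset.card_attachFin, Finset.card_range]


lemma mem_Young {k l : ℕ} {lam : Fin k → ℕ} :
    lam ∈ Young k l ↔ (∀ i, lam i ≤ l) ∧ ∀ i j : Fin k, i ≤ j → lam j ≤ lam i := by
  simp [Young, Fintype.mem_piFinset, Nat.lt_succ_iff]

lemma le_card_filter_iff {k : ℕ} {lam : Fin k → ℕ}
    (hmono : ∀ i j : Fin k, i ≤ j → lam j ≤ lam i) (i : Fin k) (m : ℕ) :
    (i : ℕ) + 1 ≤ (Finset.univ.filter fun i' : Fin k => m ≤ lam i').card ↔ m ≤ lam i := by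
  constructor
  · intro hc
    by_contra hm
    push_neg at hm
    have hsub : (Finset.univ.filter fun i' : Fin k => m ≤ lam i') ⊆
        Finset.univ.filter fun i' : Fin k => (i' : ℕ) < (i : ℕ) := by
      intro i' hi'
      simp only [Finset.mem_filter, Finset.mem_univ, true_and] at *
      by_contra hlt
      push_neg at hlt
      exact absurd (hmono i i' (Fin.le_def.2 hlt)) (by omega)
    have := Finset.card_le_card hsub
    rw [card_fin_lt (le_of_lt i.isLt)] at this
    omega
  · intro hm
    have hsub : (Finset.univ.filter fun i' : Fin k => (i' : ℕ) < (i : ℕ) + 1) ⊆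
        Finset.univ.filter fun i' : Fin k => m ≤ lam i' := by
      intro i' hi'
      simp only [Finset.mem_filter, Finset.mem_univ, true_and] at *
      exact le_trans hm (hmono i' i (Fin.le_def.2 (by omega)))
    have := Finset.card_le_card hsub
    rwa [card_fin_lt i.isLt] at this

lemma Ytr_mem {k l : ℕ} {lam : Fin k → ℕ} (h : lam ∈ Young k l) :
    Ytr l lam ∈ Young l k := by
  rw [mem_Young]
  constructor
  · intro j
    exact le_trans (Finset.card_filter_le _ _) (by simp)
  · intro j j' hjj'
    apply Finset.card_le_card
    intro i hi
    simp only [Finset.mem_filter, Finset.mem_univ, true_and] at *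
    have : (j : ℕ) ≤ (j' : ℕ) := hjj'
    omega

lemma Ytr_Ytr {k l : ℕ} {lam : Fin k → ℕ} (h : lam ∈ Young k l) :
    Ytr k (Ytr l lam) = lam := by
  rw [mem_Young] at h
  funext i
  show (Finset.univ.filter fun j : Fin l => (i : ℕ) + 1 ≤ Ytr l lam j).card = lam i
  have : (Finset.univ.filter fun j : Fin l => (i : ℕ) + 1 ≤ Ytr l lam j) =
      Finset.univ.filter fun j : Fin l => (j : ℕ) < lam i := by
    ext j
    simp only [Finset.mem_filter, Finset.mem_univ, true_and]
    rw [show Ytr l lam j = (Finset.univ.filter fun i' : Fin k => (j : ℕ) + 1 ≤ lam i').card from rfl,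
      le_card_filter_iff h.2 i ((j : ℕ) + 1)]
    omega
  rw [this, card_fin_lt (h.1 i)]

lemma Ytr_Ycomp {k l : ℕ} {lam : Fin k → ℕ} (h : lam ∈ Young k l) :
    Ytr l (Ycomp l lam) = Ycomp k (Ytr l lam) := by
  rw [mem_Young] at h
  funext j
  show (Finset.univ.filter fun i : Fin k => (j : ℕ) + 1 ≤ l - lam i.rev).card
      = k - Ytr l lam j.rev
  have h1 : (Finset.univ.filter fun i : Fin k => (j : ℕ) + 1 ≤ l - lam i.rev)
      = (Finset.univ.filter fun i : Fin k => lam i < l - (j : ℕ)).map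
        ⟨Fin.rev, Fin.rev_injective⟩ := by
    ext i
    simp only [Finset.mem_filter, Finset.mem_univ, true_and, Finset.mem_map,
      Function.Embedding.coeFn_mk]
    constructor
    · intro hi
      refine ⟨i.rev, ?_, i.rev_rev⟩
      have := h.1 i.rev
      have := j.isLt
      omega
    · rintro ⟨i', hi', rfl⟩
      have := h.1 i'
      rw [Fin.rev_rev]
      have := j.isLt
      omega
  have h2 : Ytr l lam j.rev = (Finset.univ.filter fun i : Fin k => l - (j : ℕ) ≤ lam i).card := by
    unfold Ytr
    congr 1
    ext i
    have hj : (j.rev : ℕ) = l - ((j : ℕ) + 1) := Fin.val_rev j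
    have := j.isLt
    simp only [Finset.mem_filter, Finset.mem_univ, true_and]
    omega
  rw [h1, Finset.card_map, h2]
  have := Finset.card_filter_add_card_filter_not
    (s := (Finset.univ : Finset (Fin k))) (p := fun i => l - (j : ℕ) ≤ lam i)
  simp only [not_le, Finset.card_univ, Fintype.card_fin] at this
  omega

theorem S_symm' (k l : ℕ) :
    ((Young k l).filter fun lam => Ycomp l lam = lam).card
  = ((Young l k).filter fun lam => Ycomp k lam = lam).card := by
  apply Finset.card_bij' (fun lam _ => Ytr l lam) (fun mu _ => Ytr k mu)
  · intro lam hlam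
    rw [Finset.mem_filter] at hlam ⊢
    refine ⟨Ytr_mem hlam.1, ?_⟩
    rw [← Ytr_Ycomp hlam.1, hlam.2]
  · intro mu hmu
    rw [Finset.mem_filter] at hmu ⊢
    refine ⟨Ytr_mem hmu.1, ?_⟩
    rw [← Ytr_Ycomp hmu.1, hmu.2]
  · intro lam hlam
    exact Ytr_Ytr (Finset.mem_filter.1 hlam).1
  · intro mu hmu
    exact Ytr_Ytr (Finset.mem_filter.1 hmu).1

/-- S(k,l) = S(l,k). -/
theorem S_symm (k l : ℕ) : S k l = S l k := by
  unfold S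
  exact S_symm' k l
end

section
/- If k and l are both even (and k ≥ 1, l ≥ 1), then S(k−1,l) + S(k,l−1) = S(k,l). -/
open Finset

/-!
The two middle rows of a symmetric diagram with `2c + 2` rows sum to `l`, so `λ_c ≥ λ_{c+1}`.
If they are equal, deleting one of them is a bijection onto the symmetric diagrams with `2c + 1`
rows; if not, removing one box from each of the top `c + 1` rows is a bijection onto the symmetric
diagrams of width at most `l - 1`. Hence `S(2c+2, l) = S(2c+1, l) + S(2c+2, l-1)`.
-/

def symmYoung (k l : ℕ) : Finset (Fin k → ℕ) :=
  (Young k l).filter fun lam => Ycomp l lam = lam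

lemma S_eq_card_symmYoung (k l : ℕ) : S k l = #(symmYoung k l) := rfl

lemma mem_symmYoung {k l : ℕ} {lam : Fin k → ℕ} :
    lam ∈ symmYoung k l ↔ Antitone lam ∧ ∀ i, lam i + lam i.rev = l := by
  simp only [symmYoung, Young, Ycomp, mem_filter, Fintype.mem_piFinset, mem_range,
    Nat.lt_succ_iff, funext_iff]
  constructor
  · rintro ⟨⟨hle, hanti⟩, hsymm⟩
    exact ⟨hanti, fun i => by have := hsymm i; have := hle i.rev; omega⟩
  · rintro ⟨hanti, hsum⟩
    exact ⟨⟨fun i => by have := hsum i; omega, hanti⟩, fun i => by have := hsum i; omega⟩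

lemma comp_mem_symmYoung {m n l : ℕ} {f : Fin m → Fin n} {lam : Fin n → ℕ}
    (hf : Monotone f) (hf_rev : ∀ i, f i.rev = (f i).rev) (h : lam ∈ symmYoung n l) :
    lam ∘ f ∈ symmYoung m l := by
  rw [mem_symmYoung] at h ⊢
  exact ⟨h.1.comp_monotone hf, fun i => by simpa [hf_rev] using h.2 (f i)⟩

section Middle

-- `p.rev = p` makes `p` the middle index of `Fin n`, so `p.castSucc` and `p.succ` are the two
-- middle rows of a diagram with `n + 1` rows.
variable {n l : ℕ} {p : Fin n} {lam : Fin (n + 1) → ℕ}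

lemma rev_le_castSucc_iff (hp : p.rev = p) (i : Fin (n + 1)) :
    i.rev ≤ p.castSucc ↔ ¬ i ≤ p.castSucc := by
  rw [Fin.rev_le_iff, Fin.rev_castSucc, hp, not_le, Fin.castSucc_lt_iff_succ_le]

lemma comp_succAbove_castSucc_eq (hmid : lam p.succ = lam p.castSucc) :
    lam ∘ p.castSucc.succAbove = lam ∘ p.succ.succAbove := by
  funext j
  rcases lt_trichotomy j p with hj | rfl | hj
  · simp [Fin.succAbove_of_castSucc_lt, hj, Fin.castSucc_lt_succ_iff, hj.le]
  · simp [hmid]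
  · simp [Fin.succAbove_of_le_castSucc, hj.le, Fin.succ_le_castSucc_iff, hj]

lemma comp_succAbove_mem_symmYoung (hp : p.rev = p) (h : lam ∈ symmYoung (n + 1) l)
    (hmid : lam p.succ = lam p.castSucc) :
    lam ∘ p.castSucc.succAbove ∈ symmYoung n l := by
  rw [mem_symmYoung] at h ⊢
  refine ⟨h.1.comp_monotone (Fin.strictMono_succAbove _).monotone, fun i => ?_⟩
  have hrev : (lam ∘ p.castSucc.succAbove) i.rev = lam (p.castSucc.succAbove i).rev := by
    rw [comp_succAbove_castSucc_eq hmid, Function.comp_apply, Fin.succAbove_rev_right,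
      Fin.rev_succ, hp]
  rw [hrev]
  exact h.2 _

lemma card_symmYoung_eq_card_filter_eq (hp : p.rev = p) :
    #(symmYoung n l) =
      #((symmYoung (n + 1) l).filter fun lam => lam p.succ = lam p.castSucc) := by
  refine card_nbij' (fun lam => lam ∘ p.predAbove) (fun lam => lam ∘ p.castSucc.succAbove)
    (fun lam h => ?_) (fun lam h => ?_) (fun lam _ => ?_) (fun lam h => ?_)
  · have hrev (i : Fin (n + 1)) : p.predAbove i.rev = (p.predAbove i).rev := by
      rw [Fin.rev_predAbove, hp]
    exact mem_filter.2 ⟨comp_mem_symmYoung (Fin.predAbove_right_monotone p) hrev h, by simp⟩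
  · exact comp_succAbove_mem_symmYoung hp (mem_filter.1 h).1 (mem_filter.1 h).2
  · funext i
    simp
  · funext i
    by_cases hi : i = p.castSucc
    · subst hi
      simpa using (mem_filter.1 h).2
    · simp [Fin.succAbove_predAbove hi]

def raiseTop (p : Fin n) (lam : Fin (n + 1) → ℕ) : Fin (n + 1) → ℕ :=
  fun i => if i ≤ p.castSucc then lam i + 1 else lam i

def lowerTop (p : Fin n) (lam : Fin (n + 1) → ℕ) : Fin (n + 1) → ℕ :=
  fun i => if i ≤ p.castSucc then lam i - 1 else lam i

lemma raiseTop_mem_symmYoung (hp : p.rev = p) (h : lam ∈ symmYoung (n + 1) l) :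
    raiseTop p lam ∈ symmYoung (n + 1) (l + 1) := by
  rw [mem_symmYoung] at h ⊢
  refine ⟨fun i j hij => ?_, fun i => ?_⟩
  · have := h.1 hij
    simp only [raiseTop]
    split_ifs <;> omega
  · have := h.2 i
    simp only [raiseTop, rev_le_castSucc_iff hp]
    split_ifs <;> omega

lemma apply_succ_lt_of_le_castSucc (h : lam ∈ symmYoung (n + 1) l)
    (hmid : lam p.succ ≠ lam p.castSucc) {i : Fin (n + 1)} (hi : i ≤ p.castSucc) :
    lam p.succ < lam i :=
  have hanti := (mem_symmYoung.1 h).1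
  ((hanti (Fin.castSucc_le_succ p)).lt_of_ne hmid).trans_le (hanti hi)

lemma lowerTop_mem_symmYoung (hp : p.rev = p) (h : lam ∈ symmYoung (n + 1) (l + 1))
    (hmid : lam p.succ ≠ lam p.castSucc) :
    lowerTop p lam ∈ symmYoung (n + 1) l := by
  have htop := fun i => apply_succ_lt_of_le_castSucc h hmid (i := i)
  rw [mem_symmYoung] at h ⊢
  refine ⟨fun i j hij => ?_, fun i => ?_⟩
  · have := h.1 hij
    simp only [lowerTop]
    split_ifs with hj hi hi
    · omega
    · exact absurd (hij.trans hj) hi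
    · have := htop i hi
      have := h.1 (Fin.castSucc_lt_iff_succ_le.1 (not_le.1 hj))
      omega
    · exact this
  · have := h.2 i
    simp only [lowerTop, rev_le_castSucc_iff hp]
    split_ifs with hi
    · have := htop i hi
      omega
    · have := htop i.rev ((rev_le_castSucc_iff hp i).2 hi)
      omega

lemma card_symmYoung_eq_card_filter_ne (hp : p.rev = p) :
    #(symmYoung (n + 1) l) =
      #((symmYoung (n + 1) (l + 1)).filter fun lam => lam p.succ ≠ lam p.castSucc) := by
  refine card_nbij' (raiseTop p) (lowerTop p) (fun lam h => ?_) (fun lam h => ?_)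
    (fun lam _ => ?_) (fun lam h => ?_)
  · refine mem_filter.2 ⟨raiseTop_mem_symmYoung hp h, ?_⟩
    have := (mem_symmYoung.1 h).1 (Fin.castSucc_le_succ p)
    simp only [raiseTop, le_refl, if_true, Fin.succ_le_castSucc_iff, lt_irrefl, if_false]
    omega
  · exact lowerTop_mem_symmYoung hp (mem_filter.1 h).1 (mem_filter.1 h).2
  · funext i
    simp only [raiseTop, lowerTop]
    split_ifs <;> omega
  · funext i
    obtain ⟨hsymm, hmid⟩ := mem_filter.1 h
    have := fun hi => apply_succ_lt_of_le_castSucc hsymm hmid (i := i) hi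
    simp only [raiseTop, lowerTop]
    split_ifs <;> omega

lemma S_add_S_eq_S_of_rev_eq_self (hp : p.rev = p) :
    S n (l + 1) + S (n + 1) l = S (n + 1) (l + 1) := by
  rw [S_eq_card_symmYoung, S_eq_card_symmYoung, S_eq_card_symmYoung,
    card_symmYoung_eq_card_filter_eq hp, card_symmYoung_eq_card_filter_ne hp]
  exact card_filter_add_card_filter_not _

end Middle

theorem S_even_recursion_general (k l : ℕ) (hk : Even k)
    (hk1 : 1 ≤ k) (hl1 : 1 ≤ l) :
    S (k - 1) l + S k (l - 1) = S k l := by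
  obtain ⟨c, rfl⟩ : ∃ c, k = 2 * c + 1 + 1 := by
    obtain ⟨a, rfl⟩ := hk
    exact ⟨a - 1, by omega⟩
  obtain ⟨m, rfl⟩ : ∃ m, l = m + 1 := ⟨l - 1, by omega⟩
  have hmiddle : (⟨c, by omega⟩ : Fin (2 * c + 1)).rev = ⟨c, by omega⟩ := by
    ext
    simp only [Fin.val_rev]
    omega
  simpa using S_add_S_eq_S_of_rev_eq_self hmiddle

/-- if k and l are both even (and positive) then
S(k-1,l) + S(k,l-1) = S(k,l). -/
theorem S_even_recursion (k l : ℕ) (hk : Even k) (hl : Even l)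
    (hk1 : 1 ≤ k) (hl1 : 1 ≤ l) :
    S (k - 1) l + S k (l - 1) = S k l :=
  S_even_recursion_general k l hk hk1 hl1
end

section
/- If d and e are both even (and d ≥ 1, e ≥ 1), then A(d,e) = A(d−1,e) + A(d,e−1). -/
open Finset

lemma sym_iff {k l : ℕ} {lam : Fin k → ℕ} (h : ∀ i, lam i ≤ l) :
    Ycomp l lam = lam ↔ ∀ i : Fin k, lam i + lam i.rev = l := by
  rw [funext_iff]
  unfold Ycomp
  constructor
  · intro hc i
    have h1 := hc i
    have h2 := h i.rev
    omega
  · intro hc i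
    have h1 := hc i
    omega

lemma S_add_A (k l : ℕ) : S k l + A k l = R k l :=
  Finset.card_filter_add_card_filter_not _

lemma R_rec0 (k l : ℕ) : ((Young (k+1) (l+1)).filter fun lam => lam (Fin.last k) = 0).card = R k (l+1) := by
    refine Finset.card_bij' (fun lam _ => fun i : Fin k => lam i.castSucc)
      (fun mu _ => fun i : Fin (k+1) => if h : i.val < k then mu ⟨i.val, h⟩ else 0)
      ?hi ?hj ?left ?right
    case hi =>
      intro lam hlam
      simp only [Finset.mem_filter, mem_Young] at hlam
      simp only [mem_Young]
      exact ⟨fun i => hlam.1.1 _, fun i j hij => hlam.1.2 _ _ (by simpa using hij)⟩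
    case hj =>
      intro mu hmu
      simp only [mem_Young] at hmu
      simp only [Finset.mem_filter, mem_Young]
      refine ⟨⟨fun i => ?_, fun i j hij => ?_⟩, ?_⟩
      · split
        · exact hmu.1 _
        · omega
      · rcases Nat.lt_or_ge j.val k with hj | hj
        · have hi : i.val < k := lt_of_le_of_lt hij hj
          rw [dif_pos hi, dif_pos hj]
          exact hmu.2 ⟨i.val, hi⟩ ⟨j.val, hj⟩ hij
        · rw [dif_neg (by omega)]; omega
      · simp [Fin.last]
    case right =>
      intro mu _
      funext i
      show (if h : ((i.castSucc : Fin (k+1))).val < k then mu ⟨(i.castSucc : Fin (k+1)).val, h⟩ else 0) = mu i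
      rw [dif_pos (by simpa using i.isLt)]
      exact congrArg mu (Fin.ext rfl)
    case left =>
      intro lam hlam
      simp only [Finset.mem_filter, mem_Young] at hlam
      funext i
      show (if h : i.val < k then lam (Fin.castSucc ⟨i.val, h⟩) else 0) = lam i
      split
      · exact congrArg lam (Fin.ext rfl)
      · have hilast : i = Fin.last k := by
          apply Fin.ext; simp only [Fin.last]; omega
        rw [hilast, hlam.2]

lemma R_rec1 (k l : ℕ) : ((Young (k+1) (l+1)).filter fun lam => ¬ lam (Fin.last k) = 0).card = R (k+1) l := by
    refine Finset.card_bij' (fun lam _ => fun i : Fin (k+1) => lam i - 1)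
      (fun mu _ => fun i : Fin (k+1) => mu i + 1) ?hi ?hj ?left ?right
    case hi =>
      intro lam hlam
      simp only [Finset.mem_filter, mem_Young] at hlam
      simp only [mem_Young]
      refine ⟨fun i => ?_, fun i j hij => ?_⟩
      · have := hlam.1.1 i; omega
      · have := hlam.1.2 _ _ hij; omega
    case hj =>
      intro mu hmu
      simp only [mem_Young] at hmu
      simp only [Finset.mem_filter, mem_Young]
      refine ⟨⟨fun i => ?_, fun i j hij => ?_⟩, ?_⟩
      · have := hmu.1 i; omega
      · have := hmu.2 _ _ hij; omega
      · omega
    case left =>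
      intro lam hlam
      simp only [Finset.mem_filter, mem_Young] at hlam
      funext i
      show lam i - 1 + 1 = lam i
      have h1 := hlam.1.2 i (Fin.last k) (Fin.le_last i)
      have h2 := hlam.2
      omega
    case right =>
      intro mu _
      funext i
      show mu i + 1 - 1 = mu i
      omega

lemma R_rec (k l : ℕ) : R (k+1) (l+1) = R k (l+1) + R (k+1) l := by
  have hsplit := Finset.card_filter_add_card_filter_not
    (s := Young (k+1) (l+1)) (fun lam => lam (Fin.last k) = 0)
  rw [R_rec0, R_rec1] at hsplit
  exact hsplit.symm

def halfE (a e : ℕ) (lam : Fin (2*a) → ℕ) : Fin a → ℕ :=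
  fun i => lam ⟨i.val, by omega⟩ - (e - e/2)

def foldE (a e : ℕ) (mu : Fin a → ℕ) : Fin (2*a) → ℕ :=
  fun i => if h : i.val < a then mu ⟨i.val, h⟩ + (e - e/2)
           else e/2 - mu ⟨2*a-1-i.val, by have := i.isLt; omega⟩

lemma foldE_lt {a e : ℕ} (mu : Fin a → ℕ) (i : Fin (2*a)) (h : i.val < a) :
    foldE a e mu i = mu ⟨i.val, h⟩ + (e - e/2) := dif_pos h

lemma foldE_ge {a e : ℕ} (mu : Fin a → ℕ) (i : Fin (2*a)) (h : ¬ i.val < a) :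
    foldE a e mu i = e/2 - mu ⟨2*a-1-i.val, by have := i.isLt; omega⟩ := dif_neg h

lemma S_even (a e : ℕ) : S (2*a) e = R a (e/2) := by
  unfold S R
  refine Finset.card_bij' (fun lam _ => halfE a e lam) (fun mu _ => foldE a e mu)
    ?hi ?hj ?left ?right
  case hi =>
    intro lam hlam
    simp only [Finset.mem_filter, mem_Young] at hlam
    obtain ⟨⟨hb, hmono⟩, hsymm⟩ := hlam
    simp only [mem_Young, halfE]
    constructor
    · intro i
      have h1 := hb (⟨i.val, by omega⟩ : Fin (2*a))
      omega
    · intro i j hij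
      have h1 := hmono (⟨i.val, by omega⟩ : Fin (2*a)) (⟨j.val, by omega⟩ : Fin (2*a))
        (by simpa using (hij : i.val ≤ j.val))
      omega
  case hj =>
    intro mu hmu
    simp only [mem_Young] at hmu
    obtain ⟨hb, hmono⟩ := hmu
    have hbound : ∀ i : Fin (2*a), foldE a e mu i ≤ e := by
      intro i
      rcases Nat.lt_or_ge i.val a with h | h
      · rw [foldE_lt mu i h]
        have := hb ⟨i.val, h⟩
        omega
      · rw [foldE_ge mu i (by omega)]
        omega
    simp only [Finset.mem_filter, mem_Young]
    refine ⟨⟨hbound, ?_⟩, ?_⟩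
    · intro i j hij
      have hij' : i.val ≤ j.val := hij
      rcases Nat.lt_or_ge j.val a with hj | hj
      · have hi : i.val < a := by omega
        rw [foldE_lt mu i hi, foldE_lt mu j hj]
        have := hmono ⟨i.val, hi⟩ ⟨j.val, hj⟩ (by simpa using hij')
        omega
      · rcases Nat.lt_or_ge i.val a with hi | hi
        · rw [foldE_lt mu i hi, foldE_ge mu j (by omega)]
          omega
        · rw [foldE_ge mu i (by omega), foldE_ge mu j (by omega)]
          have hji := j.isLt
          have := hmono ⟨2*a-1-j.val, by omega⟩ ⟨2*a-1-i.val, by omega⟩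
            (by simp only [Fin.mk_le_mk]; omega)
          omega
    · rw [sym_iff hbound]
      intro i
      rcases Nat.lt_or_ge i.val a with h | h
      · rw [foldE_lt mu i h, foldE_ge mu i.rev (by rw [Fin.val_rev]; omega)]
        have hx : mu ⟨2*a-1-(i.rev).val, by have := Fin.val_rev i; have := i.isLt; omega⟩ = mu ⟨i.val, h⟩ :=
          congrArg mu (Fin.ext (by simp only [Fin.val_rev]; omega))
        have := hb ⟨i.val, h⟩
        omega
      · rw [foldE_ge mu i (by omega), foldE_lt mu i.rev (by rw [Fin.val_rev]; have := i.isLt; omega)]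
        have hx : mu ⟨(i.rev).val, by rw [Fin.val_rev]; have := i.isLt; omega⟩
            = mu ⟨2*a-1-i.val, by have := i.isLt; omega⟩ :=
          congrArg mu (Fin.ext (by simp only [Fin.val_rev]; omega))
        have := hb ⟨2*a-1-i.val, by have := i.isLt; omega⟩
        omega
  case left =>
    intro lam hlam
    simp only [Finset.mem_filter, mem_Young] at hlam
    obtain ⟨⟨hb, hmono⟩, hsymm⟩ := hlam
    have hsum := (sym_iff hb).mp hsymm
    have hge : ∀ (i : Fin (2*a)), i.val < a → e - e/2 ≤ lam i := by
      intro i hi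
      have hrev : i ≤ i.rev := by
        rw [Fin.le_def, Fin.val_rev]; have := i.isLt; omega
      have h1 := hmono i i.rev hrev
      have h2 := hsum i
      omega
    funext i
    show foldE a e (halfE a e lam) i = lam i
    rcases Nat.lt_or_ge i.val a with h | h
    · rw [foldE_lt _ i h]
      simp only [halfE]
      have hx : lam ⟨i.val, by omega⟩ = lam i := congrArg lam (Fin.ext rfl)
      have := hge i h
      omega
    · rw [foldE_ge _ i (by omega)]
      simp only [halfE]
      have hia := i.isLt
      set j : Fin (2*a) := ⟨2*a-1-i.val, by omega⟩ with hj
      have hjrev : lam j.rev = lam i := by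
        apply congrArg lam
        apply Fin.ext
        rw [Fin.val_rev]
        simp only [hj]
        omega
      have h1 := hsum j
      have h2 := hge j (by simp only [hj]; omega)
      have h3 := hb j
      omega
  case right =>
    intro mu hmu
    simp only [mem_Young] at hmu
    funext i
    show halfE a e (foldE a e mu) i = mu i
    simp only [halfE]
    rw [foldE_lt mu ⟨i.val, by omega⟩ (by exact i.isLt)]
    simp only [Fin.val_mk]
    have hx : mu ⟨i.val, i.isLt⟩ = mu i := congrArg mu (Fin.ext rfl)
    omega

def halfO (a b : ℕ) (lam : Fin (2*a+1) → ℕ) : Fin a → ℕ :=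
  fun i => lam ⟨i.val, by omega⟩ - b

def foldO (a b : ℕ) (mu : Fin a → ℕ) : Fin (2*a+1) → ℕ :=
  fun i => if h : i.val < a then mu ⟨i.val, h⟩ + b
           else if h2 : i.val = a then b
           else b - mu ⟨2*a-i.val, by have := i.isLt; omega⟩

lemma foldO_lt {a b : ℕ} (mu : Fin a → ℕ) (i : Fin (2*a+1)) (h : i.val < a) :
    foldO a b mu i = mu ⟨i.val, h⟩ + b := dif_pos h

lemma foldO_mid {a b : ℕ} (mu : Fin a → ℕ) (i : Fin (2*a+1)) (h : i.val = a) :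
    foldO a b mu i = b := by
  unfold foldO
  rw [dif_neg (by omega), dif_pos h]

lemma foldO_gt {a b : ℕ} (mu : Fin a → ℕ) (i : Fin (2*a+1)) (h : a < i.val) :
    foldO a b mu i = b - mu ⟨2*a-i.val, by have := i.isLt; omega⟩ := by
  unfold foldO
  rw [dif_neg (by omega), dif_neg (by omega)]

lemma S_odd (a b : ℕ) : S (2*a+1) (2*b) = R a b := by
  unfold S R
  refine Finset.card_bij' (fun lam _ => halfO a b lam) (fun mu _ => foldO a b mu)
    ?hi ?hj ?left ?right
  case hi =>
    intro lam hlam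
    simp only [Finset.mem_filter, mem_Young] at hlam
    obtain ⟨⟨hb, hmono⟩, hsymm⟩ := hlam
    simp only [mem_Young, halfO]
    constructor
    · intro i
      have h1 := hb (⟨i.val, by omega⟩ : Fin (2*a+1))
      omega
    · intro i j hij
      have h1 := hmono (⟨i.val, by omega⟩ : Fin (2*a+1)) (⟨j.val, by omega⟩ : Fin (2*a+1))
        (by simpa using (hij : i.val ≤ j.val))
      omega
  case hj =>
    intro mu hmu
    simp only [mem_Young] at hmu
    obtain ⟨hb, hmono⟩ := hmu
    have hbound : ∀ i : Fin (2*a+1), foldO a b mu i ≤ 2*b := by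
      intro i
      rcases Nat.lt_trichotomy i.val a with h | h | h
      · rw [foldO_lt mu i h]
        have := hb ⟨i.val, h⟩
        omega
      · rw [foldO_mid mu i h]; omega
      · rw [foldO_gt mu i h]; omega
    simp only [Finset.mem_filter, mem_Young]
    refine ⟨⟨hbound, ?_⟩, ?_⟩
    · intro i j hij
      have hij' : i.val ≤ j.val := hij
      rcases Nat.lt_trichotomy j.val a with hj | hj | hj
      · have hi : i.val < a := by omega
        rw [foldO_lt mu i hi, foldO_lt mu j hj]
        have := hmono ⟨i.val, hi⟩ ⟨j.val, hj⟩ (by simpa using hij')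
        omega
      · rw [foldO_mid mu j hj]
        rcases Nat.lt_or_ge i.val a with hi | hi
        · rw [foldO_lt mu i hi]; omega
        · rw [foldO_mid mu i (by omega)]
      · rw [foldO_gt mu j hj]
        rcases Nat.lt_trichotomy i.val a with hi | hi | hi
        · rw [foldO_lt mu i hi]; omega
        · rw [foldO_mid mu i hi]; omega
        · rw [foldO_gt mu i hi]
          have := hmono ⟨2*a-j.val, by omega⟩ ⟨2*a-i.val, by omega⟩
            (by simp only [Fin.mk_le_mk]; omega)
          omega
    · rw [sym_iff hbound]
      intro i
      have hrv := Fin.val_rev i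
      have hia := i.isLt
      rcases Nat.lt_trichotomy i.val a with h | h | h
      · rw [foldO_lt mu i h, foldO_gt mu i.rev (by omega)]
        have hx : mu ⟨2*a-(i.rev).val, by have := (i.rev).isLt; omega⟩ = mu ⟨i.val, h⟩ :=
          congrArg mu (Fin.ext (by simp only [Fin.val_mk]; omega))
        have := hb ⟨i.val, h⟩
        omega
      · rw [foldO_mid mu i h, foldO_mid mu i.rev (by omega)]; omega
      · rw [foldO_gt mu i h, foldO_lt mu i.rev (by omega)]
        have hx : mu ⟨(i.rev).val, by omega⟩ = mu ⟨2*a-i.val, by omega⟩ :=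
          congrArg mu (Fin.ext (by simp only [Fin.val_mk]; omega))
        have := hb ⟨2*a-i.val, by omega⟩
        omega
  case left =>
    intro lam hlam
    simp only [Finset.mem_filter, mem_Young] at hlam
    obtain ⟨⟨hb, hmono⟩, hsymm⟩ := hlam
    have hsum := (sym_iff hb).mp hsymm
    have hmid : lam ⟨a, by omega⟩ = b := by
      have h1 := hsum ⟨a, by omega⟩
      have h2 : lam (Fin.rev ⟨a, by omega⟩) = lam ⟨a, by omega⟩ :=
        congrArg lam (Fin.ext (by rw [Fin.val_rev]; simp only [Fin.val_mk]; omega))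
      omega
    have hge : ∀ (i : Fin (2*a+1)), i.val < a → b ≤ lam i := by
      intro i hi
      have h1 := hmono i ⟨a, by omega⟩ (by simp only [Fin.le_def, Fin.val_mk]; omega)
      omega
    funext i
    show foldO a b (halfO a b lam) i = lam i
    have hia := i.isLt
    rcases Nat.lt_trichotomy i.val a with h | h | h
    · rw [foldO_lt _ i h]
      simp only [halfO, Fin.val_mk]
      have hx : lam ⟨i.val, by omega⟩ = lam i := congrArg lam (Fin.ext rfl)
      have := hge i h
      omega
    · rw [foldO_mid _ i h]
      have hx : lam ⟨a, by omega⟩ = lam i := congrArg lam (Fin.ext (by simp only [Fin.val_mk]; omega))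
      omega
    · rw [foldO_gt _ i h]
      simp only [halfO, Fin.val_mk]
      have h1 := hsum ⟨2*a-i.val, by omega⟩
      have hjrev : lam (Fin.rev ⟨2*a-i.val, by omega⟩) = lam i := by
        apply congrArg lam
        apply Fin.ext
        rw [Fin.val_rev]
        simp only [Fin.val_mk]
        omega
      have h2 := hge ⟨2*a-i.val, by omega⟩ (by simp only [Fin.val_mk]; omega)
      have h3 := hb (⟨2*a-i.val, by omega⟩ : Fin (2*a+1))
      omega
  case right =>
    intro mu hmu
    simp only [mem_Young] at hmu
    funext i
    show halfO a b (foldO a b mu) i = mu i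
    simp only [halfO]
    rw [foldO_lt mu ⟨i.val, by omega⟩ (by exact i.isLt)]
    simp only [Fin.val_mk]
    have hx : mu ⟨i.val, i.isLt⟩ = mu i := congrArg mu (Fin.ext rfl)
    omega

/-- if d and e are both even (and positive) then
A(d,e) = A(d-1,e) + A(d,e-1). -/
theorem A_even_recursion (d e : ℕ) (hd : Even d) (he : Even e)
    (hd1 : 1 ≤ d) (he1 : 1 ≤ e) :
    A d e = A (d - 1) e + A d (e - 1) := by
  obtain ⟨a, ha⟩ := hd
  obtain ⟨b, hbe⟩ := he
  have ha0 : a ≠ 0 := by omega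
  have hb0 : b ≠ 0 := by omega
  obtain ⟨a', rfl⟩ := Nat.exists_eq_succ_of_ne_zero ha0
  obtain ⟨b', rfl⟩ := Nat.exists_eq_succ_of_ne_zero hb0
  subst ha hbe
  rw [show a' + 1 + (a' + 1) = 2*a'+2 from by ring,
      show b' + 1 + (b' + 1) = 2*b'+2 from by ring]
  rw [show (2*a'+2) - 1 = 2*a'+1 from rfl, show (2*b'+2) - 1 = 2*b'+1 from rfl]
  have hR1 : R (2*a'+2) (2*b'+2) = R (2*a'+1) (2*b'+2) + R (2*a'+2) (2*b'+1) :=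
    R_rec (2*a'+1) (2*b'+1)
  have hR2 : R (a'+1) (b'+1) = R a' (b'+1) + R (a'+1) b' := R_rec a' b'
  have hS1 : S (2*a'+2) (2*b'+2) = R (a'+1) (b'+1) := by
    have h := S_even (a'+1) (2*b'+2)
    rw [show (2*b'+2)/2 = b'+1 from by omega] at h
    exact h
  have hS2 : S (2*a'+1) (2*b'+2) = R a' (b'+1) := S_odd a' (b'+1)
  have hS3 : S (2*a'+2) (2*b'+1) = R (a'+1) b' := by
    have h := S_even (a'+1) (2*b'+1)
    rw [show (2*b'+1)/2 = b' from by omega] at h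
    exact h
  have h1 := S_add_A (2*a'+2) (2*b'+2)
  have h2 := S_add_A (2*a'+1) (2*b'+2)
  have h3 := S_add_A (2*a'+2) (2*b'+1)
  omega
end

section
/- Let λ ∈ Y(k,l) be a symmetric partition. Then the sum Σ_{i=1}^{l} λ^t_i · λ^t_{l+1−i} is odd if and only if l is odd and k ≡ 2 (mod 4); in all other cases the sum is even. -/
open Finset

private lemma aux_symmetric_sum_parity (k l : ℕ) (lam : Fin k → ℕ)
    (hlam : lam ∈ (Fintype.piFinset fun _ : Fin k => Finset.range (l + 1)))
    (hsym : (fun i : Fin k => l - lam i.rev) = lam) :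
    Odd (∑ j : Fin l, (Finset.univ.filter fun i : Fin k => (j : ℕ) + 1 ≤ lam i).card *
      (Finset.univ.filter fun i : Fin k => (j.rev : ℕ) + 1 ≤ lam i).card) ↔ Odd l ∧ k % 4 = 2 := by
  set μ : Fin l → ℕ := fun j => (Finset.univ.filter fun i : Fin k => (j : ℕ) + 1 ≤ lam i).card with hμ
  have hle : ∀ i : Fin k, lam i ≤ l := by
    intro i
    have := (Fintype.mem_piFinset.mp hlam) i
    simpa [Nat.lt_succ_iff] using this
  have hc : ∀ i : Fin k, l - lam i.rev = lam i := fun i => congrFun hsym i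
  have key : ∀ j : Fin l, μ j + μ j.rev = k := by
    intro j
    have h1 : ∀ i : Fin k, (((j : ℕ) + 1 ≤ lam i) ↔ ¬ ((j.rev : ℕ) + 1 ≤ lam i.rev)) := by
      intro i
      have h2 := hle i.rev
      have h3 := hc i
      have h4 : (j.rev : ℕ) = l - ((j : ℕ) + 1) := Fin.val_rev j
      have h5 := j.isLt
      omega
    have h6 : μ j = (Finset.univ.filter fun i : Fin k => ¬ ((j.rev : ℕ) + 1 ≤ lam i.rev)).card := by
      show (Finset.univ.filter fun i : Fin k => (j : ℕ) + 1 ≤ lam i).card = _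
      exact congrArg Finset.card (Finset.filter_congr (fun i _ => h1 i))
    have h7 : (Finset.univ.filter fun i : Fin k => ¬ ((j.rev : ℕ) + 1 ≤ lam i.rev)).card
        = (Finset.univ.filter fun i : Fin k => ¬ ((j.rev : ℕ) + 1 ≤ lam i)).card := by
      apply Finset.card_bij' (fun i _ => i.rev) (fun i _ => i.rev) <;> simp
    have h8 := Finset.card_filter_add_card_filter_not
      (s := (Finset.univ : Finset (Fin k))) (fun i : Fin k => (j.rev : ℕ) + 1 ≤ lam i)
    simp only [Finset.card_univ, Fintype.card_fin] at h8
    rw [h6, h7]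
    have h9 : μ j.rev = (Finset.univ.filter fun i : Fin k => ((j.rev : ℕ)) + 1 ≤ lam i).card := rfl
    omega
  have hrevsum : ∑ j : Fin l, μ j.rev = ∑ j : Fin l, μ j :=
    Fintype.sum_bijective Fin.rev Fin.rev_bijective _ _ (fun j => rfl)
  set T := ∑ j : Fin l, μ j with hT
  have h2T : 2 * T = k * l := by
    have : ∑ j : Fin l, (μ j + μ j.rev) = ∑ j : Fin l, k := Finset.sum_congr rfl (fun j _ => key j)
    rw [Finset.sum_add_distrib, hrevsum] at this
    simp only [Finset.sum_const, Finset.card_univ, Fintype.card_fin, smul_eq_mul] at this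
    rw [two_mul, this, Nat.mul_comm]
  have hSQ : (∑ j : Fin l, μ j * μ j.rev) + (∑ j : Fin l, μ j * μ j) = T * k := by
    rw [hT, ← Finset.sum_add_distrib, Finset.sum_mul]
    refine Finset.sum_congr rfl (fun j _ => ?_)
    have := key j
    nlinarith [key j]
  have hQ : (∑ j : Fin l, μ j * μ j) % 2 = T % 2 := by
    rw [hT, Finset.sum_nat_mod, Finset.sum_nat_mod (f := μ)]
    congr 1
    refine Finset.sum_congr rfl (fun j _ => ?_)
    rcases Nat.even_or_odd (μ j) with h | h <;>
      rcases h with ⟨m, hm⟩ <;> rw [hm] <;> ring_nf <;> omega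
  set S := ∑ j : Fin l, μ j * μ j.rev with hS
  set Q := ∑ j : Fin l, μ j * μ j with hQdef
  have hS2 : S % 2 = ((k + 1) * T) % 2 := by
    have hP : (k + 1) * T = T * k + T := by ring
    omega
  rw [Nat.odd_iff, hS2, ← Nat.odd_iff, Nat.odd_mul]
  rcases Nat.even_or_odd k with ⟨m, hm⟩ | hk
  · subst hm
    have hT' : T = m * l := by nlinarith
    rw [hT', Nat.odd_mul]
    constructor
    · rintro ⟨-, hm, hl⟩
      exact ⟨hl, by rw [Nat.odd_iff] at hm; omega⟩
    · rintro ⟨hl, hm⟩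
      refine ⟨?_, ?_, hl⟩
      · rw [Nat.odd_iff]; omega
      · rw [Nat.odd_iff]; omega
  · rw [Nat.odd_iff] at hk
    constructor
    · rintro ⟨h1, -⟩
      rw [Nat.odd_iff] at h1; omega
    · rintro ⟨-, h2⟩
      omega


/-- for a symmetric partition λ ∈ Y(k,l), the sum
Σ_{i=1}^{l} λ^t_i · λ^t_{l+1−i} is odd iff l is odd and k ≡ 2 (mod 4). -/
theorem symmetric_sum_parity (k l : ℕ) (lam : Fin k → ℕ)
    (hlam : lam ∈ Young k l) (hsym : Ycomp l lam = lam) :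
    Odd (∑ j : Fin l, Ytr l lam j * Ytr l lam j.rev) ↔ Odd l ∧ k % 4 = 2 :=
  aux_symmetric_sum_parity k l lam (Finset.mem_filter.mp hlam).1 hsym
end

section
/- Let λ = (λ_1, …, λ_m) be a Young diagram with λ_1 ≥ λ_2 ≥ … ≥ λ_m ≥ 0, and let λ° denote the skew shape obtained by rotating λ by 180 degrees, namely the skew shape μ/ν where μ = ((λ_1), (λ_1), …, (λ_1)) has m rows each of length λ_1 and ν = (λ_1 − λ_m, λ_1 − λ_{m−1}, …, λ_1 − λ_1). Then there is exactly one Littlewood–Richardson skew tableau of shape λ° with content λ; that is, the number of fillings of the boxes of μ/ν by positive integers that are weakly increasing along each row, strictly increasing down each column, contain exactly λ_j entries equal to j for each j, and whose reverse reading word is a lattice word, equals 1. -/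
open Finset

/-- The set of boxes (0-indexed, rows `i : Fin m` from top to bottom, columns `j : ℕ`
from left to right) of the skew shape `λ°` obtained by rotating the Young diagram `λ`
by 180 degrees: it is the skew shape `μ/ν` where every row of `μ` has length
`λ_1 = max λ` and `ν_i = λ_1 − λ_{m+1−i}`; so row `i` consists of the columns `j` with
`λ_1 − λ_{m+1−i} ≤ j < λ_1`. -/
def rot180Boxes (m : ℕ) (lam : Fin m → ℕ) : Finset (Fin m × ℕ) :=
  ((Finset.univ : Finset (Fin m)) ×ˢ Finset.range (Finset.univ.sup lam)).filter
    fun p => Finset.univ.sup lam - lam p.1.rev ≤ p.2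

/-!
Column `c` of `λ°` consists of the bottom `h c` rows, where `h c` is the number of `j` with
`λ_1 - λ_j ≤ c`; hence `λ_j` is the number of columns of height `> j`. Filling every column
with `1, 2, …, h c` from top to bottom therefore has content `λ`, and it is a
Littlewood–Richardson tableau because every entry `t + 2` sits directly below an entry `t + 1`,
which is read earlier.

Conversely, in a column-strict filling by positive integers the `k`-th box of a column holds
an entry `≥ k`, so such a filling dominates the canonical one box by box. Having the same
content, both fillings have the same sum, hence they coincide.
-/

theorem Fin.mem_iff_lt_card_of_isLowerSet {m : ℕ} {s : Finset (Fin m)}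
    (hs : IsLowerSet (s : Set (Fin m))) (j : Fin m) : j ∈ s ↔ (j : ℕ) < #s := by
  constructor
  · intro hj
    have hsub : Iic j ⊆ s := fun k hk => hs (mem_Iic.mp hk) hj
    simpa using card_le_card hsub
  · intro hlt
    by_contra hj
    have hsub : s ⊆ Iio j := fun k hk =>
      mem_Iio.mpr (lt_of_not_ge fun hjk => hj (hs hjk hk))
    have := card_le_card hsub
    rw [Fin.card_Iio] at this
    omega

theorem Finset.sum_eq_sum_of_card_filter_eq {α M : Type*} [AddCommMonoid M] [DecidableEq M]
    {s : Finset α} {f g : α → M} (h : ∀ v, #{a ∈ s | f a = v} = #{a ∈ s | g a = v}) :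
    ∑ a ∈ s, f a = ∑ a ∈ s, g a := by
  have hmap : s.val.map f = s.val.map g := by
    ext v
    rw [Multiset.count_map, Multiset.count_map]
    exact (by simpa only [eq_comm] using h v : #{a ∈ s | v = f a} = #{a ∈ s | v = g a})
  simp only [Finset.sum, hmap]

namespace Rot180

variable {m : ℕ} {lam : Fin m → ℕ}

/-- The number of boxes of `λ°` in column `c`, for `c < λ_1`. -/
def colHeight (lam : Fin m → ℕ) (c : ℕ) : ℕ :=
  #{j | univ.sup lam - lam j ≤ c}

theorem colHeight_le (c : ℕ) : colHeight lam c ≤ m :=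
  (card_filter_le _ _).trans_eq (card_fin m)

theorem colHeight_mono : Monotone (colHeight lam) := fun _ _ hcc' =>
  card_le_card fun j hj => by
    simp only [mem_filter, mem_univ, true_and] at hj ⊢
    exact hj.trans hcc'

theorem lt_colHeight_iff (hlam : Antitone lam) (j : Fin m) (c : ℕ) :
    (j : ℕ) < colHeight lam c ↔ univ.sup lam - lam j ≤ c := by
  refine (Fin.mem_iff_lt_card_of_isLowerSet ?_ j).symm.trans (by simp)
  intro k j hkj hj
  simp only [coe_filter, mem_univ, true_and, Set.mem_ofPred_eq] at hj ⊢
  have := hlam hkj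
  omega

theorem mem_rot180Boxes_iff (hlam : Antitone lam) {p : Fin m × ℕ} :
    p ∈ rot180Boxes m lam ↔ p.2 < univ.sup lam ∧ (p.1.rev : ℕ) < colHeight lam p.2 := by
  rw [lt_colHeight_iff hlam]
  simp [rot180Boxes]

/-- Each column of `λ°` filled with `1, 2, …` from top to bottom. -/
def canonicalTableau (m : ℕ) (lam : Fin m → ℕ) (p : Fin m × ℕ) : ℕ :=
  if p ∈ rot180Boxes m lam then colHeight lam p.2 - p.1.rev else 0

theorem canonicalTableau_of_mem {p : Fin m × ℕ} (hp : p ∈ rot180Boxes m lam) :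
    canonicalTableau m lam p = colHeight lam p.2 - p.1.rev :=
  if_pos hp

theorem canonicalTableau_of_notMem {p : Fin m × ℕ} (hp : p ∉ rot180Boxes m lam) :
    canonicalTableau m lam p = 0 :=
  if_neg hp

theorem canonicalTableau_mono_along_row {p q : Fin m × ℕ} (hp : p ∈ rot180Boxes m lam)
    (hq : q ∈ rot180Boxes m lam) (hrow : p.1 = q.1) (hcol : p.2 ≤ q.2) :
    canonicalTableau m lam p ≤ canonicalTableau m lam q := by
  rw [canonicalTableau_of_mem hp, canonicalTableau_of_mem hq, hrow]
  exact Nat.sub_le_sub_right (colHeight_mono hcol) _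

/-- The box directly above `q` (junk: `q` itself when `q` lies in row `0`). -/
def boxAbove (q : Fin m × ℕ) : Fin m × ℕ :=
  (⟨q.1 - 1, Nat.sub_lt_of_lt q.1.isLt⟩, q.2)

variable (hlam : Antitone lam)
include hlam

theorem canonicalTableau_eq_succ_iff {p : Fin m × ℕ} (hp : p ∈ rot180Boxes m lam) (v : ℕ) :
    canonicalTableau m lam p = v + 1 ↔ (p.1.rev : ℕ) + v + 1 = colHeight lam p.2 := by
  have := ((mem_rot180Boxes_iff hlam).mp hp).2
  rw [canonicalTableau_of_mem hp]
  omega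

theorem canonicalTableau_pos {p : Fin m × ℕ} (hp : p ∈ rot180Boxes m lam) :
    0 < canonicalTableau m lam p := by
  have := ((mem_rot180Boxes_iff hlam).mp hp).2
  rw [canonicalTableau_of_mem hp]
  omega

theorem canonicalTableau_strictMono_down_column {p q : Fin m × ℕ} (hp : p ∈ rot180Boxes m lam)
    (hq : q ∈ rot180Boxes m lam) (hcol : p.2 = q.2) (hrow : (p.1 : ℕ) < q.1) :
    canonicalTableau m lam p < canonicalTableau m lam q := by
  have := ((mem_rot180Boxes_iff hlam).mp hp).2
  rw [canonicalTableau_of_mem hp, canonicalTableau_of_mem hq, ← hcol]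
  simp only [Fin.val_rev] at this ⊢
  omega

theorem card_filter_canonicalTableau_eq_succ_of_lt {j : ℕ} (hj : j < m) :
    #{p ∈ rot180Boxes m lam | canonicalTableau m lam p = j + 1} = lam ⟨j, hj⟩ := by
  have hcols : lam ⟨j, hj⟩ = #(Ico (univ.sup lam - lam ⟨j, hj⟩) (univ.sup lam)) := by
    have : lam ⟨j, hj⟩ ≤ univ.sup lam := le_sup (mem_univ _)
    rw [Nat.card_Ico]
    omega
  have hrow : ∀ c, colHeight lam c - (j + 1) < m := fun c => by
    have := colHeight_le (lam := lam) c
    omega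
  let boxWithEntry (c : ℕ) : Fin m × ℕ :=
    ((⟨colHeight lam c - (j + 1), hrow c⟩ : Fin m).rev, c)
  rw [hcols]
  refine card_nbij' Prod.snd boxWithEntry ?_ ?_ ?_ (fun _ _ => rfl)
  · intro p hp
    simp only [coe_filter, Set.mem_ofPred_eq] at hp
    have := (canonicalTableau_eq_succ_iff hlam hp.1 j).mp hp.2
    simp only [coe_Ico, Set.mem_Ico, ← lt_colHeight_iff hlam]
    exact ⟨by omega, ((mem_rot180Boxes_iff hlam).mp hp.1).1⟩
  · intro c hc
    simp only [coe_Ico, Set.mem_Ico, ← lt_colHeight_iff hlam] at hc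
    have hbox : boxWithEntry c ∈ rot180Boxes m lam := by
      rw [mem_rot180Boxes_iff hlam, Fin.rev_rev]
      exact ⟨hc.2, by simp only [boxWithEntry]; omega⟩
    simp only [coe_filter, Set.mem_ofPred_eq]
    refine ⟨hbox, (canonicalTableau_eq_succ_iff hlam hbox j).mpr ?_⟩
    simp only [boxWithEntry, Fin.rev_rev]
    omega
  · intro p hp
    simp only [coe_filter, Set.mem_ofPred_eq] at hp
    have := (canonicalTableau_eq_succ_iff hlam hp.1 j).mp hp.2
    refine Prod.ext (Fin.rev_eq_iff.mpr (Fin.ext ?_)) rfl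
    simp only
    omega

theorem card_filter_canonicalTableau_eq_succ (j : ℕ) :
    #{p ∈ rot180Boxes m lam | canonicalTableau m lam p = j + 1} =
      if h : j < m then lam ⟨j, h⟩ else 0 := by
  split_ifs with hj
  · exact card_filter_canonicalTableau_eq_succ_of_lt hlam hj
  · refine card_eq_zero.mpr (filter_eq_empty_iff.mpr fun p hp hval => hj ?_)
    have := (canonicalTableau_eq_succ_iff hlam hp j).mp hval
    have := colHeight_le (lam := lam) p.2
    omega

theorem canonicalTableau_boxAbove {q : Fin m × ℕ} (hq : q ∈ rot180Boxes m lam) {t : ℕ}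
    (ht : canonicalTableau m lam q = t + 2) :
    ((boxAbove q).1 : ℕ) + 1 = q.1 ∧ boxAbove q ∈ rot180Boxes m lam ∧
      canonicalTableau m lam (boxAbove q) = t + 1 := by
  have hq' := (canonicalTableau_eq_succ_iff hlam hq (t + 1)).mp ht
  have := colHeight_le (lam := lam) q.2
  simp only [Fin.val_rev] at hq'
  have hrow : ((boxAbove q).1 : ℕ) + 1 = q.1 := by simp only [boxAbove]; omega
  have hbox : boxAbove q ∈ rot180Boxes m lam := by
    rw [mem_rot180Boxes_iff hlam]
    refine ⟨((mem_rot180Boxes_iff hlam).mp hq).1, ?_⟩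
    simp only [boxAbove, Fin.val_rev]
    omega
  refine ⟨hrow, hbox, (canonicalTableau_eq_succ_iff hlam hbox t).mpr ?_⟩
  simp only [boxAbove, Fin.val_rev] at hrow ⊢
  omega

theorem canonicalTableau_lattice (p : Fin m × ℕ) (t : ℕ) :
    #{q ∈ rot180Boxes m lam |
        (q.1 < p.1 ∨ (q.1 = p.1 ∧ p.2 ≤ q.2)) ∧ canonicalTableau m lam q = t + 2} ≤
      #{q ∈ rot180Boxes m lam |
        (q.1 < p.1 ∨ (q.1 = p.1 ∧ p.2 ≤ q.2)) ∧ canonicalTableau m lam q = t + 1} := by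
  refine card_le_card_of_injOn boxAbove ?_ ?_
  · intro q hq
    simp only [coe_filter, Set.mem_ofPred_eq] at hq ⊢
    obtain ⟨hrow, hbox, hval⟩ := canonicalTableau_boxAbove hlam hq.1 hq.2.2
    refine ⟨hbox, Or.inl ?_, hval⟩
    rcases hq.2.1 with hlt | ⟨heq, -⟩
    · exact lt_trans (Fin.lt_def.mpr (by omega)) hlt
    · exact heq ▸ Fin.lt_def.mpr (by omega)
  · intro q hq q' hq' heq
    simp only [coe_filter, Set.mem_ofPred_eq] at hq hq'
    have h := (canonicalTableau_boxAbove hlam hq.1 hq.2.2).1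
    have h' := (canonicalTableau_boxAbove hlam hq'.1 hq'.2.2).1
    rw [heq] at h
    exact Prod.ext (Fin.ext (h.symm.trans h')) (congrArg Prod.snd heq :)

theorem canonicalTableau_le_of_colStrict {T : Fin m × ℕ → ℕ}
    (hpos : ∀ p ∈ rot180Boxes m lam, 0 < T p)
    (hcol : ∀ p ∈ rot180Boxes m lam, ∀ q ∈ rot180Boxes m lam,
      p.2 = q.2 → (p.1 : ℕ) < q.1 → T p < T q)
    {p : Fin m × ℕ} (hp : p ∈ rot180Boxes m lam) : canonicalTableau m lam p ≤ T p := by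
  suffices ∀ n, ∀ p ∈ rot180Boxes m lam, canonicalTableau m lam p = n + 1 → n + 1 ≤ T p by
    obtain ⟨n, hn⟩ := Nat.exists_eq_add_one.mpr (canonicalTableau_pos hlam hp)
    exact hn ▸ this n p hp hn
  intro n
  induction n with
  | zero => exact fun p hp _ => hpos p hp
  | succ n ih =>
    intro p hp hval
    obtain ⟨hrow, hbox, hval'⟩ := canonicalTableau_boxAbove hlam hp hval
    have := hcol _ hbox p hp rfl (by omega)
    have := ih _ hbox hval'
    omega

theorem eq_canonicalTableau {T : Fin m × ℕ → ℕ}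
    (hzero : ∀ p, p ∉ rot180Boxes m lam → T p = 0)
    (hpos : ∀ p ∈ rot180Boxes m lam, 0 < T p)
    (hcol : ∀ p ∈ rot180Boxes m lam, ∀ q ∈ rot180Boxes m lam,
      p.2 = q.2 → (p.1 : ℕ) < q.1 → T p < T q)
    (hcont : ∀ j : ℕ, #{p ∈ rot180Boxes m lam | T p = j + 1} =
      if h : j < m then lam ⟨j, h⟩ else 0) :
    T = canonicalTableau m lam := by
  have hsum : ∑ p ∈ rot180Boxes m lam, canonicalTableau m lam p =
      ∑ p ∈ rot180Boxes m lam, T p := by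
    refine sum_eq_sum_of_card_filter_eq fun v => ?_
    cases v with
    | zero =>
      simp only [filter_eq_empty_iff.mpr fun p hp => (canonicalTableau_pos hlam hp).ne',
        filter_eq_empty_iff.mpr fun p hp => (hpos p hp).ne']
    | succ j => rw [card_filter_canonicalTableau_eq_succ hlam, hcont]
  have heq := (sum_eq_sum_iff_of_le fun _ hp =>
    canonicalTableau_le_of_colStrict hlam hpos hcol hp).mp hsum
  funext p
  by_cases hp : p ∈ rot180Boxes m lam
  · exact (heq p hp).symm
  · rw [hzero p hp, canonicalTableau_of_notMem hp]

end Rot180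

open Rot180 in
/-- there is exactly one Littlewood–Richardson skew tableau of shape `λ°`
(the 180-degree rotation of `λ`) with content `λ`: i.e. there is exactly one filling `T`
of the boxes of `λ°` by positive integers (normalized to be `0` outside of the boxes)
which is weakly increasing along rows, strictly increasing down columns, contains exactly
`λ_j` entries equal to `j` for every positive integer `j` (and none equal to `j > m`),
and whose reverse reading word (rows top to bottom, each row right to left) is a lattice
word: in every prefix, the number of occurrences of `t` is at least the number of
occurrences of `t+1`, for every positive integer `t`. -/
theorem unique_LR_tableau_rot180 (m : ℕ) (lam : Fin m → ℕ)
    (hanti : ∀ i j : Fin m, i ≤ j → lam j ≤ lam i) :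
    ∃! T : Fin m × ℕ → ℕ,
      (∀ p : Fin m × ℕ, p ∉ rot180Boxes m lam → T p = 0) ∧
      (∀ p ∈ rot180Boxes m lam, 0 < T p) ∧
      (∀ p ∈ rot180Boxes m lam, ∀ q ∈ rot180Boxes m lam,
        p.1 = q.1 → p.2 ≤ q.2 → T p ≤ T q) ∧
      (∀ p ∈ rot180Boxes m lam, ∀ q ∈ rot180Boxes m lam,
        p.2 = q.2 → (p.1 : ℕ) < (q.1 : ℕ) → T p < T q) ∧
      (∀ j : ℕ, ((rot180Boxes m lam).filter fun p => T p = j + 1).card =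
        if h : j < m then lam ⟨j, h⟩ else 0) ∧
      (∀ p ∈ rot180Boxes m lam, ∀ t : ℕ,
        ((rot180Boxes m lam).filter fun q =>
          (q.1 < p.1 ∨ (q.1 = p.1 ∧ p.2 ≤ q.2)) ∧ T q = t + 2).card ≤
        ((rot180Boxes m lam).filter fun q =>
          (q.1 < p.1 ∨ (q.1 = p.1 ∧ p.2 ≤ q.2)) ∧ T q = t + 1).card) := by
  have hlam : Antitone lam := hanti
  refine ⟨canonicalTableau m lam,
    ⟨fun p => canonicalTableau_of_notMem,
      fun p => canonicalTableau_pos hlam,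
      fun p hp q hq => canonicalTableau_mono_along_row hp hq,
      fun p hp q hq => canonicalTableau_strictMono_down_column hlam hp hq,
      card_filter_canonicalTableau_eq_succ hlam,
      fun p _ => canonicalTableau_lattice hlam p⟩, ?_⟩
  rintro T ⟨hzero, hpos, -, hcol, hcont, -⟩
  exact eq_canonicalTableau hlam hzero hpos hcol hcont
end
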